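/- arXiv:math/0611078 — 2 statements merged into one kernel-verified Lean document; each statement's English description precedes it below -/
import Mathlib

section
/- Let θ : ℝ → S³ be differentiable with derivative θ₁, and let R(t) = H̃(θ(t))H(θ(t))ᵀ be the associated rotation matrix. Then the body angular velocity matrix Ω̂ = RᵀR' satisfies Ω̂ = 2 H(θ) H(θ₁)ᵀ, and it equals the skew matrix corresponding to the vector Ω = 2 H(θ)θ₁, i.e. Ω̂v = (2H(θ)θ₁) × v for all v ∈ ℝ³. -/
open Matrix

def Hmat (θ : Fin 4 → ℝ) : Matrix (Fin 3) (Fin 4) ℝ :=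
  !![-θ 1, θ 0, θ 3, -θ 2; -θ 2, -θ 3, θ 0, θ 1; -θ 3, θ 2, -θ 1, θ 0]

def Htil (θ : Fin 4 → ℝ) : Matrix (Fin 3) (Fin 4) ℝ :=
  !![-θ 1, θ 0, -θ 3, θ 2; -θ 2, θ 3, θ 0, -θ 1; -θ 3, -θ 2, θ 1, θ 0]

lemma htil_hmatT (a b : Fin 4 → ℝ) : Htil a * (Hmat b)ᵀ =
    !![(-1)*a 3*b 3 + (-1)*a 2*b 2 + a 1*b 1 + a 0*b 0,
        (-1)*a 3*b 0 + a 2*b 1 + a 1*b 2 + (-1)*a 0*b 3,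
        a 3*b 1 + a 2*b 0 + a 1*b 3 + a 0*b 2;
      a 3*b 0 + a 2*b 1 + a 1*b 2 + a 0*b 3,
        (-1)*a 3*b 3 + a 2*b 2 + (-1)*a 1*b 1 + a 0*b 0,
        a 3*b 2 + a 2*b 3 + (-1)*a 1*b 0 + (-1)*a 0*b 1;
      a 3*b 1 + (-1)*a 2*b 0 + a 1*b 3 + (-1)*a 0*b 2,
        a 3*b 2 + a 2*b 3 + a 1*b 0 + a 0*b 1,
        a 3*b 3 + (-1)*a 2*b 2 + (-1)*a 1*b 1 + a 0*b 0] := by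
  ext i j
  simp only [Matrix.mul_apply, Matrix.transpose_apply, Fin.sum_univ_four]
  fin_cases i <;> fin_cases j <;> simp [Hmat, Htil] <;> ring

lemma hmat_hmatT (a b : Fin 4 → ℝ) : Hmat a * (Hmat b)ᵀ =
    !![a 3*b 3 + a 2*b 2 + a 1*b 1 + a 0*b 0,
        a 3*b 0 + (-1)*a 2*b 1 + a 1*b 2 + (-1)*a 0*b 3,
        (-1)*a 3*b 1 + (-1)*a 2*b 0 + a 1*b 3 + a 0*b 2;
      (-1)*a 3*b 0 + a 2*b 1 + (-1)*a 1*b 2 + a 0*b 3,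
        a 3*b 3 + a 2*b 2 + a 1*b 1 + a 0*b 0,
        (-1)*a 3*b 2 + a 2*b 3 + a 1*b 0 + (-1)*a 0*b 1;
      a 3*b 1 + a 2*b 0 + (-1)*a 1*b 3 + (-1)*a 0*b 2,
        a 3*b 2 + (-1)*a 2*b 3 + (-1)*a 1*b 0 + a 0*b 1,
        a 3*b 3 + a 2*b 2 + a 1*b 1 + a 0*b 0] := by
  ext i j
  simp only [Matrix.mul_apply, Matrix.transpose_apply, Fin.sum_univ_four]
  fin_cases i <;> fin_cases j <;> simp [Hmat] <;> ring

lemma hmat_mulVec (a b : Fin 4 → ℝ) : (Hmat a).mulVec b =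
    ![a 3*b 2 + (-1)*a 2*b 3 + (-1)*a 1*b 0 + a 0*b 1,
      (-1)*a 3*b 1 + (-1)*a 2*b 0 + a 1*b 3 + a 0*b 2,
      (-1)*a 3*b 0 + a 2*b 1 + (-1)*a 1*b 2 + a 0*b 3] := by
  funext i
  simp only [Matrix.mulVec, dotProduct, Fin.sum_univ_four]
  fin_cases i <;> simp [Hmat] <;> ring

theorem stmt6 (θ θ₁ : ℝ → Fin 4 → ℝ)
    (hθ : ∀ t, θ t ⬝ᵥ θ t = 1)
    (hd : ∀ t i, HasDerivAt (fun s => θ s i) (θ₁ t i) t)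
    (R' : ℝ → Matrix (Fin 3) (Fin 3) ℝ)
    (hR' : ∀ t i j, HasDerivAt (fun s => (Htil (θ s) * (Hmat (θ s))ᵀ) i j) (R' t i j) t)
    (t : ℝ) :
    (Htil (θ t) * (Hmat (θ t))ᵀ)ᵀ * R' t = (2:ℝ) • (Hmat (θ t) * (Hmat (θ₁ t))ᵀ) ∧
    ∀ v : Fin 3 → ℝ,
      ((Htil (θ t) * (Hmat (θ t))ᵀ)ᵀ * R' t).mulVec v
        = crossProduct ((2:ℝ) • (Hmat (θ t)).mulVec (θ₁ t)) v := by
  -- derivative of each entry of Htil ∘ θ and Hmat ∘ θ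
  have hHt : ∀ i k, HasDerivAt (fun s => Htil (θ s) i k) (Htil (θ₁ t) i k) t := by
    intro i k
    fin_cases i <;> fin_cases k <;>
      simp only [Htil, cons_val', cons_val_zero, cons_val_one, head_cons, empty_val',
        cons_val_fin_one, head_fin_const, cons_val_two, cons_val_three, tail_cons,
        of_apply, Fin.isValue] <;>
      first
        | exact hd t _
        | exact (hd t _).neg
  have hHm : ∀ j k, HasDerivAt (fun s => Hmat (θ s) j k) (Hmat (θ₁ t) j k) t := by
    intro j k
    fin_cases j <;> fin_cases k <;>
      simp only [Hmat, cons_val', cons_val_zero, cons_val_one, head_cons, empty_val',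
        cons_val_fin_one, head_fin_const, cons_val_two, cons_val_three, tail_cons,
        of_apply, Fin.isValue] <;>
      first
        | exact hd t _
        | exact (hd t _).neg
  -- R' explicitly
  have hR'val : R' t = Htil (θ₁ t) * (Hmat (θ t))ᵀ + Htil (θ t) * (Hmat (θ₁ t))ᵀ := by
    ext i j
    have h1 : HasDerivAt (fun s => (Htil (θ s) * (Hmat (θ s))ᵀ) i j)
        ((Htil (θ₁ t) * (Hmat (θ t))ᵀ + Htil (θ t) * (Hmat (θ₁ t))ᵀ) i j) t := by
      simp only [Matrix.add_apply, mul_apply, transpose_apply, ← Finset.sum_add_distrib]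
      exact HasDerivAt.fun_sum fun k _ => ((hHt i k).mul (hHm j k)).congr_deriv (by ring)
    exact (hR' t i j).unique h1
  -- the unit-norm relation, expanded
  have hq := hθ t
  simp only [dotProduct, Fin.sum_univ_four] at hq
  -- derivative of the constant 1 gives θ ⬝ θ₁ = 0
  have hp : θ t 0 * θ₁ t 0 + θ t 1 * θ₁ t 1 + θ t 2 * θ₁ t 2 + θ t 3 * θ₁ t 3 = 0 := by
    have hconst : HasDerivAt (fun s : ℝ => (1 : ℝ))
        (2 * (θ t 0 * θ₁ t 0 + θ t 1 * θ₁ t 1 + θ t 2 * θ₁ t 2 + θ t 3 * θ₁ t 3)) t := by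
      have h2 : HasDerivAt (fun s => θ s 0 * θ s 0 + θ s 1 * θ s 1 + θ s 2 * θ s 2 + θ s 3 * θ s 3)
          (2 * (θ t 0 * θ₁ t 0 + θ t 1 * θ₁ t 1 + θ t 2 * θ₁ t 2 + θ t 3 * θ₁ t 3)) t := by
        have := ((((hd t 0).mul (hd t 0)).add ((hd t 1).mul (hd t 1))).add
            ((hd t 2).mul (hd t 2))).add ((hd t 3).mul (hd t 3))
        exact this.congr_deriv (by ring)
      refine h2.congr_of_eventuallyEq ?_
      filter_upwards with s
      have := hθ s
      simp only [dotProduct, Fin.sum_univ_four] at this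
      exact this.symm
    have h0 : deriv (fun _ : ℝ => (1 : ℝ)) t = 0 := deriv_const t 1
    have := hconst.deriv
    rw [h0] at this
    linarith
  have part1 : (Htil (θ t) * (Hmat (θ t))ᵀ)ᵀ * R' t
      = (2:ℝ) • (Hmat (θ t) * (Hmat (θ₁ t))ᵀ) := by
    rw [hR'val, htil_hmatT (θ t) (θ t), htil_hmatT (θ₁ t) (θ t), htil_hmatT (θ t) (θ₁ t),
      hmat_hmatT (θ t) (θ₁ t)]
    ext i j
    simp only [Matrix.mul_apply, Matrix.add_apply, Matrix.smul_apply, Matrix.transpose_apply,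
      smul_eq_mul, Fin.sum_univ_three]
    fin_cases i <;> fin_cases j <;> simp
    · linear_combination (2*θ t 3*θ₁ t 3 + 2*θ t 2*θ₁ t 2 + 2*θ t 1*θ₁ t 1 + 2*θ t 0*θ₁ t 0) * hq
    · linear_combination (2*θ t 3*θ₁ t 0 + (-2)*θ t 2*θ₁ t 1 + 2*θ t 1*θ₁ t 2 + (-2)*θ t 0*θ₁ t 3) * hq
    · linear_combination ((-2)*θ t 3*θ₁ t 1 + (-2)*θ t 2*θ₁ t 0 + 2*θ t 1*θ₁ t 3 + 2*θ t 0*θ₁ t 2) * hq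
    · linear_combination ((-2)*θ t 3*θ₁ t 0 + 2*θ t 2*θ₁ t 1 + (-2)*θ t 1*θ₁ t 2 + 2*θ t 0*θ₁ t 3) * hq
    · linear_combination (2*θ t 3*θ₁ t 3 + 2*θ t 2*θ₁ t 2 + 2*θ t 1*θ₁ t 1 + 2*θ t 0*θ₁ t 0) * hq
    · linear_combination ((-2)*θ t 3*θ₁ t 2 + 2*θ t 2*θ₁ t 3 + 2*θ t 1*θ₁ t 0 + (-2)*θ t 0*θ₁ t 1) * hq
    · linear_combination (2*θ t 3*θ₁ t 1 + 2*θ t 2*θ₁ t 0 + (-2)*θ t 1*θ₁ t 3 + (-2)*θ t 0*θ₁ t 2) * hq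
    · linear_combination (2*θ t 3*θ₁ t 2 + (-2)*θ t 2*θ₁ t 3 + (-2)*θ t 1*θ₁ t 0 + 2*θ t 0*θ₁ t 1) * hq
    · linear_combination (2*θ t 3*θ₁ t 3 + 2*θ t 2*θ₁ t 2 + 2*θ t 1*θ₁ t 1 + 2*θ t 0*θ₁ t 0) * hq
  refine ⟨part1, ?_⟩
  intro v
  rw [part1, hmat_hmatT (θ t) (θ₁ t), hmat_mulVec (θ t) (θ₁ t)]
  funext i
  simp only [crossProduct, Matrix.mulVec, Matrix.smul_apply, Pi.smul_apply, dotProduct,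
    smul_eq_mul, Fin.sum_univ_three, LinearMap.mk₂_apply]
  fin_cases i <;> simp
  · linear_combination (2 * v 0) * hp
  · linear_combination (2 * v 1) * hp
  · linear_combination (2 * v 2) * hp
end

section
/- Let G_ro(α) = 4 dφᵀ H(φ(α))ᵀ 𝕀 H(φ(α)) dφ be the Riemannian metric of rotational kinetic energy. Then the Euler–Lagrange operator of T_ro = ½⟨α₁, G_ro α₁⟩ along a curve α(t), expressed via θ = φ(α), θ₁ = θ', θ₂ = θ'', equals 4 dφᵀH(θ)ᵀ𝕀H(θ)θ₂ + 8 dφᵀH(θ₁)ᵀ𝕀H(θ)θ₁. -/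
open Matrix

/-- The differential dφ as a 4×3 matrix. -/
noncomputable def dphi (φ : (Fin 3 → ℝ) → (Fin 4 → ℝ)) (α : Fin 3 → ℝ) :
    Matrix (Fin 4) (Fin 3) ℝ :=
  Matrix.of fun i j => fderiv ℝ φ α (Pi.single j 1) i

/-- The Riemannian metric G_ro = 4 dφᵀ Hᵀ 𝕀 H dφ of rotational kinetic energy. -/
noncomputable def Gro (𝕀 : Matrix (Fin 3) (Fin 3) ℝ)
    (φ : (Fin 3 → ℝ) → (Fin 4 → ℝ)) (α : Fin 3 → ℝ) : Matrix (Fin 3) (Fin 3) ℝ :=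
  (4 : ℝ) • ((dphi φ α)ᵀ * (Hmat (φ α))ᵀ * 𝕀 * Hmat (φ α) * dphi φ α)

/-- Rotational kinetic energy T_ro(α, α₁) = ½⟨α₁, G_ro(α)α₁⟩. -/
noncomputable def Tro (𝕀 : Matrix (Fin 3) (Fin 3) ℝ)
    (φ : (Fin 3 → ℝ) → (Fin 4 → ℝ)) (α v : Fin 3 → ℝ) : ℝ :=
  (1 / 2 : ℝ) * (v ⬝ᵥ (Gro 𝕀 φ α).mulVec v)

/-! ### Auxiliary lemmas -/

lemma single_decomp (w : Fin 3 → ℝ) : w = ∑ j, w j • (Pi.single j 1 : Fin 3 → ℝ) := by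
  funext k
  simp [Finset.sum_apply, Pi.single_apply]

/-- Expansion of a (continuous linear) derivative applied to a vector in terms of
partial derivatives, scalar-valued case. -/
lemma lin_expand (F : (Fin 3 → ℝ) → ℝ) (a w : Fin 3 → ℝ) :
    fderiv ℝ F a w = ∑ k, fderiv ℝ F a (Pi.single k 1) * w k := by
  conv_lhs => rw [single_decomp w]
  rw [map_sum]
  simp [mul_comm]

/-- Expansion of the derivative of `φ` applied to a vector, in terms of `dphi`. -/
lemma dir_expand (φ : (Fin 3 → ℝ) → (Fin 4 → ℝ)) (a w : Fin 3 → ℝ) (i : Fin 4) :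
    fderiv ℝ φ a w i = ∑ k, dphi φ a i k * w k := by
  conv_lhs => rw [single_decomp w]
  rw [map_sum]
  simp [dphi, mul_comm, Finset.sum_apply]

/-- Entrywise derivative of `Hmat` along a curve, using linearity of `Hmat`. -/
lemma Hmat_deriv (f : ℝ → Fin 4 → ℝ) (d : Fin 4 → ℝ) (s : ℝ)
    (hd : ∀ i, HasDerivAt (fun r => f r i) (d i) s) (k : Fin 3) (i : Fin 4) :
    HasDerivAt (fun r => Hmat (f r) k i) (Hmat d k i) s := by
  fin_cases k <;> fin_cases i <;>
    simp only [Hmat, Matrix.cons_val', Matrix.cons_val_zero, Matrix.cons_val_one,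
      Matrix.head_cons, Matrix.empty_val', Matrix.cons_val_fin_one, Matrix.head_fin_const,
      Fin.isValue, Matrix.cons_val_two, Matrix.cons_val_three, Matrix.tail_cons] <;>
    first
      | exact hd _
      | exact (hd _).neg

/-- Entrywise differentiability of `Hmat (φ a)`. -/
lemma Hmat_diff (φ : (Fin 3 → ℝ) → (Fin 4 → ℝ)) (hφ : Differentiable ℝ φ)
    (k : Fin 3) (i : Fin 4) : Differentiable ℝ (fun a => Hmat (φ a) k i) := by
  have hX : ∀ i : Fin 4, Differentiable ℝ (fun a => φ a i) := fun i =>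
    differentiable_pi.mp hφ i
  fin_cases k <;> fin_cases i <;>
    simp only [Hmat, Matrix.cons_val', Matrix.cons_val_zero, Matrix.cons_val_one,
      Matrix.head_cons, Matrix.empty_val', Matrix.cons_val_fin_one, Matrix.head_fin_const,
      Fin.isValue, Matrix.cons_val_two, Matrix.cons_val_three, Matrix.tail_cons] <;>
    first
      | exact hX _
      | exact (hX _).neg

/-- Directional derivative along a straight line. -/
lemma dirDeriv {E : Type*} [NormedAddCommGroup E] [NormedSpace ℝ E]
    (F : (Fin 3 → ℝ) → E) (x w : Fin 3 → ℝ) (hF : DifferentiableAt ℝ F x) :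
    HasDerivAt (fun r : ℝ => F (x + r • w)) (fderiv ℝ F x w) 0 := by
  have hγ : HasDerivAt (fun r : ℝ => x + r • w) w 0 := by
    refine hasDerivAt_pi.mpr fun m => ?_
    simpa using hasDerivAt_mul_const (w m)
  have h0 : (fun r : ℝ => x + r • w) 0 = x := by simp
  have hF' : HasFDerivAt F (fderiv ℝ F x) ((fun r : ℝ => x + r • w) 0) := by
    rw [h0]; exact hF.hasFDerivAt
  exact hF'.comp_hasDerivAt 0 hγ

set_option maxHeartbeats 1000000 in
/-- Expansion of `Tro` as an explicit sum. -/
lemma Tro_expand (𝕀 : Matrix (Fin 3) (Fin 3) ℝ) (φ : (Fin 3 → ℝ) → (Fin 4 → ℝ))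
    (a v : Fin 3 → ℝ) :
    Tro 𝕀 φ a v = 2 * ∑ k, (∑ i, Hmat (φ a) k i * (∑ m, dphi φ a i m * v m)) *
      (∑ l, 𝕀 k l * (∑ i, Hmat (φ a) l i * (∑ m, dphi φ a i m * v m))) := by
  simp only [Tro, Gro, Matrix.mulVec, Matrix.mul_apply, dotProduct, Matrix.transpose_apply,
    Matrix.smul_apply, smul_eq_mul, Fin.sum_univ_succ, Fin.sum_univ_zero, Finset.sum_const_zero,
    add_zero, Finset.univ_unique, Fin.default_eq_zero, Finset.sum_singleton]
  ring

set_option maxHeartbeats 1000000 in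
/-- Expansion of `Gro.mulVec` as an explicit sum. -/
lemma Gro_mulVec_expand (𝕀 : Matrix (Fin 3) (Fin 3) ℝ) (φ : (Fin 3 → ℝ) → (Fin 4 → ℝ))
    (a w : Fin 3 → ℝ) (j : Fin 3) :
    (Gro 𝕀 φ a).mulVec w j = 4 * ∑ i, dphi φ a i j *
      (∑ k, Hmat (φ a) k i * (∑ l, 𝕀 k l * (∑ m, Hmat (φ a) l m * (∑ r, dphi φ a m r * w r)))) := by
  simp only [Gro, Matrix.mulVec, Matrix.mul_apply, dotProduct, Matrix.transpose_apply,
    Matrix.smul_apply, smul_eq_mul, Fin.sum_univ_succ, Fin.sum_univ_zero, Finset.sum_const_zero,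
    add_zero, Finset.univ_unique, Fin.default_eq_zero, Finset.sum_singleton]
  ring

set_option maxHeartbeats 4000000 in
theorem stmt19 (𝕀 : Matrix (Fin 3) (Fin 3) ℝ) (h𝕀 : 𝕀ᵀ = 𝕀) (hpd : 𝕀.PosDef)
    (φ : (Fin 3 → ℝ) → (Fin 4 → ℝ)) (hφ : ContDiff ℝ (⊤ : ℕ∞) φ)
    (α α₁ : ℝ → Fin 3 → ℝ) (θ₁ θ₂ : ℝ → Fin 4 → ℝ) (p₁ : ℝ → Fin 3 → ℝ)
    (hα : ∀ t i, HasDerivAt (fun s => α s i) (α₁ t i) t)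
    (hθ1 : ∀ t i, HasDerivAt (fun s => φ (α s) i) (θ₁ t i) t)
    (hθ2 : ∀ t i, HasDerivAt (fun s => θ₁ s i) (θ₂ t i) t)
    (hp : ∀ t i, HasDerivAt (fun s => (Gro 𝕀 φ (α s)).mulVec (α₁ s) i) (p₁ t i) t)
    (t : ℝ) :
    p₁ t - (fun j => fderiv ℝ (fun a => Tro 𝕀 φ a (α₁ t)) (α t) (Pi.single j 1))
      = (4 : ℝ) • (dphi φ (α t))ᵀ.mulVec
          ((Hmat (φ (α t)))ᵀ.mulVec (𝕀.mulVec ((Hmat (φ (α t))).mulVec (θ₂ t))))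
        + (8 : ℝ) • (dphi φ (α t))ᵀ.mulVec
          ((Hmat (θ₁ t))ᵀ.mulVec (𝕀.mulVec ((Hmat (φ (α t))).mulVec (θ₁ t)))) := by
  classical
  have hφd : Differentiable ℝ φ := hφ.differentiable (by simp)
  have hD : ContDiff ℝ (⊤ : ℕ∞) (fderiv ℝ φ) := hφ.fderiv_right (by simp)
  -- differentiability of the entries of dphi
  have hYdiff : ∀ (i : Fin 4) (c : Fin 3), Differentiable ℝ (fun a => dphi φ a i c) := by
    intro i c
    have h1 : (fun a => dphi φ a i c)
        = (fun L : (Fin 3 → ℝ) →L[ℝ] (Fin 4 → ℝ) => L (Pi.single c 1) i) ∘ (fderiv ℝ φ) := rfl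
    rw [h1]
    exact (((ContinuousLinearMap.proj i).comp
      (ContinuousLinearMap.apply ℝ (Fin 4 → ℝ) (Pi.single c 1))).differentiable).comp
      (hD.differentiable (by simp))
  set Z : Fin 4 → Fin 3 → Fin 3 → ℝ :=
    fun i c d => fderiv ℝ (fun a => dphi φ a i c) (α t) (Pi.single d 1) with hZdef
  -- the chain rule identity θ₁ = dφ · α₁
  have hF1 : ∀ (s : ℝ) (m : Fin 4), θ₁ s m = ∑ r, dphi φ (α s) m r * α₁ s r := by
    intro s m
    have hc : HasDerivAt α (α₁ s) s := hasDerivAt_pi.mpr (hα s)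
    have h1 : HasDerivAt (fun r => φ (α r)) (fderiv ℝ φ (α s) (α₁ s)) s := by
      exact (hφd (α s)).hasFDerivAt.comp_hasDerivAt s hc
    have h2 := (hθ1 s m).unique ((hasDerivAt_pi.mp h1) m)
    rw [h2, dir_expand]
  -- derivative of the dphi entries along α
  have hYa : ∀ (i : Fin 4) (c : Fin 3),
      HasDerivAt (fun s => dphi φ (α s) i c) (∑ k, Z i c k * α₁ t k) t := by
    intro i c
    have hc : HasDerivAt α (α₁ t) t := hasDerivAt_pi.mpr (hα t)
    have h1 := ((hYdiff i c) (α t)).hasFDerivAt.comp_hasDerivAt t hc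
    have h2 : fderiv ℝ (fun a => dphi φ a i c) (α t) (α₁ t) = ∑ k, Z i c k * α₁ t k := by
      rw [lin_expand]
    rw [h2] at h1
    exact h1
  -- derivative of the Hmat entries along α
  have hHt : ∀ (k : Fin 3) (i : Fin 4),
      HasDerivAt (fun s => Hmat (φ (α s)) k i) (Hmat (θ₁ t) k i) t :=
    fun k i => Hmat_deriv (fun s => φ (α s)) (θ₁ t) t (hθ1 t) k i
  -- pointwise formula for Gro.mulVec α₁ in terms of θ₁
  have hGval : ∀ (s : ℝ) (j : Fin 3), (Gro 𝕀 φ (α s)).mulVec (α₁ s) j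
      = 4 * ∑ i, dphi φ (α s) i j * (∑ k, Hmat (φ (α s)) k i *
          (∑ l, 𝕀 k l * (∑ m, Hmat (φ (α s)) l m * θ₁ s m))) := by
    intro s j
    rw [Gro_mulVec_expand]
    simp only [← hF1 s]
  -- symmetry of the second derivative
  have hrepr : ∀ (i : Fin 4) (c d : Fin 3), Z i c d
      = fderiv ℝ (fderiv ℝ φ) (α t) (Pi.single d 1) (Pi.single c 1) i := by
    intro i c d
    have hdF : DifferentiableAt ℝ (fderiv ℝ φ) (α t) := (hD.differentiable (by simp)) (α t)
    have hcomp := (((ContinuousLinearMap.proj (R := ℝ) (φ := fun _ : Fin 4 => ℝ) i).comp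
        (ContinuousLinearMap.apply ℝ (Fin 4 → ℝ) (Pi.single c 1))).hasFDerivAt.comp (α t)
        hdF.hasFDerivAt).fderiv
    have h1 : (fun a => dphi φ a i c)
        = (⇑(((ContinuousLinearMap.proj (R := ℝ) (φ := fun _ : Fin 4 => ℝ) i)).comp
          (ContinuousLinearMap.apply ℝ (Fin 4 → ℝ) (Pi.single c 1)))) ∘ (fderiv ℝ φ) := rfl
    rw [hZdef]
    show fderiv ℝ (fun a => dphi φ a i c) (α t) (Pi.single d 1) = _
    rw [h1, hcomp]
    rfl
  have hsymm : ∀ (i : Fin 4) (c d : Fin 3), Z i c d = Z i d c := by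
    intro i c d
    have hs : IsSymmSndFDerivAt ℝ φ (α t) := hφ.contDiffAt.isSymmSndFDerivAt (by rw [minSmoothness_of_isRCLikeNormedField]; exact WithTop.coe_le_coe.mpr (le_top : (2 : ℕ∞) ≤ ⊤))
    rw [hrepr i c d, hrepr i d c]
    exact congrFun (hs (Pi.single d 1) (Pi.single c 1)) i
  have hI : ∀ k l : Fin 3, 𝕀 k l = 𝕀 l k := fun k l =>
    (congrFun (congrFun h𝕀 l) k : 𝕀ᵀ l k = 𝕀 l k)
  -- differentiability of the kinetic energy in α
  have hTdiff : DifferentiableAt ℝ (fun a => Tro 𝕀 φ a (α₁ t)) (α t) := by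
    have hre : (fun a => Tro 𝕀 φ a (α₁ t)) = fun a =>
        2 * ∑ k, (∑ i, Hmat (φ a) k i * (∑ m, dphi φ a i m * α₁ t m)) *
          (∑ l, 𝕀 k l * (∑ i, Hmat (φ a) l i * (∑ m, dphi φ a i m * α₁ t m))) :=
      funext fun a => Tro_expand 𝕀 φ a (α₁ t)
    rw [hre]
    have hW : ∀ k : Fin 3, DifferentiableAt ℝ
        (fun a => ∑ i, Hmat (φ a) k i * (∑ m, dphi φ a i m * α₁ t m)) (α t) :=
      fun k => DifferentiableAt.fun_sum fun i _ => ((Hmat_diff φ hφd k i) (α t)).mul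
        (DifferentiableAt.fun_sum fun m _ => ((hYdiff i m) (α t)).mul_const _)
    exact DifferentiableAt.const_mul (DifferentiableAt.fun_sum fun k _ => (hW k).mul
      (DifferentiableAt.fun_sum fun l _ => DifferentiableAt.const_mul (hW l) _)) _
  funext j
  simp only [Pi.sub_apply]
  -- value of p₁ t j
  have hPraw := HasDerivAt.const_mul (4:ℝ) (HasDerivAt.fun_sum (u := Finset.univ) fun (i : Fin 4) _ =>
    (hYa i j).fun_mul (HasDerivAt.fun_sum (u := Finset.univ) fun (k : Fin 3) _ =>
      (hHt k i).fun_mul (HasDerivAt.fun_sum (u := Finset.univ) fun (l : Fin 3) _ =>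
        HasDerivAt.const_mul (𝕀 k l) (HasDerivAt.fun_sum (u := Finset.univ) fun (m : Fin 4) _ =>
          (hHt l m).fun_mul (hθ2 t m)))))
  have hPv := (hp t j).unique (hPraw.congr_of_eventuallyEq
    (Filter.Eventually.of_forall fun s => hGval s j))
  -- value of the fderiv of Tro
  have h00 : α t + (0:ℝ) • (Pi.single j 1 : Fin 3 → ℝ) = α t := by simp
  have hXγ : ∀ i : Fin 4, HasDerivAt
      (fun r : ℝ => φ (α t + r • (Pi.single j 1 : Fin 3 → ℝ)) i) (dphi φ (α t) i j) 0 := by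
    intro i
    have h1 := dirDeriv φ (α t) (Pi.single j 1) (hφd (α t))
    have h2 := hasDerivAt_pi.mp h1 i
    simpa [dphi] using h2
  have hYγ : ∀ (i : Fin 4) (c : Fin 3), HasDerivAt
      (fun r : ℝ => dphi φ (α t + r • (Pi.single j 1 : Fin 3 → ℝ)) i c) (Z i c j) 0 := by
    intro i c
    have h1 := dirDeriv (fun a => dphi φ a i c) (α t) (Pi.single j 1) ((hYdiff i c) (α t))
    rw [hZdef]
    exact h1
  have hHγ : ∀ (k : Fin 3) (i : Fin 4), HasDerivAt
      (fun r : ℝ => Hmat (φ (α t + r • (Pi.single j 1 : Fin 3 → ℝ))) k i)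
      (Hmat (fun i' => dphi φ (α t) i' j) k i) 0 :=
    fun k i => Hmat_deriv _ _ 0 hXγ k i
  have hT1 : HasDerivAt (fun r : ℝ => Tro 𝕀 φ (α t + r • (Pi.single j 1 : Fin 3 → ℝ)) (α₁ t))
      (fderiv ℝ (fun a => Tro 𝕀 φ a (α₁ t)) (α t) (Pi.single j 1)) 0 :=
    dirDeriv _ _ _ hTdiff
  have hTraw := HasDerivAt.const_mul (2:ℝ) (HasDerivAt.fun_sum (u := Finset.univ) fun (k : Fin 3) _ =>
    HasDerivAt.fun_mul
      (HasDerivAt.fun_sum (u := Finset.univ) fun (i : Fin 4) _ => (hHγ k i).fun_mul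
        (HasDerivAt.fun_sum (u := Finset.univ) fun (m : Fin 3) _ => (hYγ i m).mul_const (α₁ t m)))
      (HasDerivAt.fun_sum (u := Finset.univ) fun (l : Fin 3) _ => HasDerivAt.const_mul (𝕀 k l)
        (HasDerivAt.fun_sum (u := Finset.univ) fun (i : Fin 4) _ => (hHγ l i).fun_mul
          (HasDerivAt.fun_sum (u := Finset.univ) fun (m : Fin 3) _ => (hYγ i m).mul_const (α₁ t m)))))
  have hfd := hT1.unique (hTraw.congr_of_eventuallyEq
    (Filter.Eventually.of_forall fun r => Tro_expand 𝕀 φ _ (α₁ t)))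
  simp only [h00] at hfd
  rw [hPv, hfd]
  -- now pure algebra
  have hzc : ∀ (i : Fin 4) (m : Fin 3), Z i m j = Z i j m := fun i m => hsymm i m j
  simp only [← hF1 t, hzc]
  simp only [Matrix.mulVec, dotProduct, Matrix.transpose_apply, Pi.add_apply, Pi.smul_apply,
    smul_eq_mul, Fin.sum_univ_three, Fin.sum_univ_four,
    show 𝕀 1 0 = 𝕀 0 1 from hI 1 0, show 𝕀 2 0 = 𝕀 0 2 from hI 2 0,
    show 𝕀 2 1 = 𝕀 1 2 from hI 2 1]
  simp only [Hmat, Matrix.cons_val', Matrix.cons_val_zero, Matrix.cons_val_one,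
    Matrix.head_cons, Matrix.empty_val', Matrix.cons_val_fin_one, Matrix.head_fin_const,
    Fin.isValue, Matrix.cons_val_two, Matrix.cons_val_three, Matrix.tail_cons,
    Matrix.of_apply]
  set_option maxRecDepth 100000 in ring
end
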